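/- Fix α ∈ [0, 2]. There exist constants 0 < c ≤ C such that for every real x with |x| > 1/2, c · |n_x|^α / (1 + |n_x|^α |x − n_x|) ≤ e^{θ(x)} ≤ C · |n_x|^α / (1 + |n_x|^α |x − n_x|). -/

import Mathlib

/-!
With `a = |n|^α` (and `a = 1` for `n = 0`) and `s = x - n`, folding the integral defining `θ_n`
onto `[0, 5/4]` gives `π θ_n(x) = ∫₀^{5/4} (arctan (a (s + t)) - arctan (a (s - t))) / t dt`.
The numerator lies in `[0, π]`, is at most `2 a t`, and is close to `π` once `t ≫ |s| + 1/a`.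
Splitting the integral at `t ≍ |s| + 1/a` gives `π θ_n(x) = π log (a / (1 + a |s|)) + O(1)` for
`|s| ≤ 1/2`, and `θ_n(x) = O(1/s²)` for `|s| ≥ 1/2`. So the nearest integer `n_x` contributes the
logarithm of the claimed main term up to `O(1)`, and every other `n` contributes
`O(1/(n - n_x)²)`, which sums to `O(1)`.
-/

open MeasureTheory intervalIntegral

/-- The integer closest to `x`, taking the smaller one when `x` is a half-integer. -/
noncomputable def nearestInt (x : ℝ) : ℤ := ⌈x - 1 / 2⌉

/-- The summand `θ_n(x)`. -/
noncomputable def thetaN (α : ℝ) (n : ℤ) (x : ℝ) : ℝ :=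
  if n = 0 then
    (1 / Real.pi) * ∫ t in (-(5/4) : ℝ)..(5/4 : ℝ),
      (Real.arctan (t + x) - Real.arctan x) / t
  else
    (1 / Real.pi) * ∫ t in (-(5/4) : ℝ)..(5/4 : ℝ),
      (Real.arctan (|(n : ℝ)| ^ α * (t + x - (n : ℝ))) -
        Real.arctan (|(n : ℝ)| ^ α * (x - (n : ℝ)))) / t

open Real Set Filter

lemma lipschitzWith_arctan : LipschitzWith 1 arctan :=
  lipschitzWith_of_nnnorm_deriv_le differentiable_arctan fun x => by
    rw [← NNReal.coe_le_coe, coe_nnnorm, Real.deriv_arctan, Real.norm_eq_abs,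
      abs_of_pos (by positivity), NNReal.coe_one, div_le_one (by positivity)]
    nlinarith [sq_nonneg x]

lemma abs_arctan_sub_arctan_le (u w : ℝ) : |arctan u - arctan w| ≤ |u - w| := by
  simpa [Real.dist_eq] using lipschitzWith_arctan.dist_le_mul u w

lemma arctan_sub_arctan_le {w u M : ℝ} (hwu : w ≤ u) (hM : ∀ τ ∈ Ioo w u, M ^ 2 ≤ τ ^ 2) :
    arctan u - arctan w ≤ (u - w) / (1 + M ^ 2) := by
  have h := (convex_Icc w u).image_sub_le_mul_sub_of_deriv_le
    continuous_arctan.continuousOn differentiable_arctan.differentiableOn (C := 1 / (1 + M ^ 2))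
    (fun τ hτ => ?_) w (left_mem_Icc.2 hwu) u (right_mem_Icc.2 hwu) hwu
  · rwa [one_div_mul_eq_div] at h
  · rw [interior_Icc] at hτ
    rw [Real.deriv_arctan]
    exact one_div_le_one_div_of_le (by positivity) (by linarith [hM τ hτ])

lemma pi_div_two_sub_inv_le_arctan {z : ℝ} (hz : 0 < z) : π / 2 - z⁻¹ ≤ arctan z := by
  have h := abs_arctan_sub_arctan_le z⁻¹ 0
  rw [arctan_inv_of_pos hz, arctan_zero, sub_zero, sub_zero, abs_of_pos (inv_pos.2 hz)] at h
  linarith [le_abs_self (π / 2 - arctan z)]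

lemma log_div_one_add_mul {a s : ℝ} (ha : 0 < a) (hs : 0 ≤ s) :
    log (a / (1 + a * s)) = -log (1 / a + s) := by
  rw [← log_inv, show (1 / a + s)⁻¹ = a / (1 + a * s) by field_simp]

lemma intervalIntegrable_div_self_of_abs_le {f : ℝ → ℝ} (hf : Continuous f) {K : ℝ}
    (hK : ∀ t, |f t| ≤ K * |t|) (c d : ℝ) :
    IntervalIntegrable (fun t => f t / t) volume c d := by
  have hK0 : 0 ≤ K := by simpa using (abs_nonneg _).trans (hK 1)
  refine (intervalIntegrable_const (c := K)).mono_fun'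
    (hf.measurable.div measurable_id).aestronglyMeasurable (Eventually.of_forall fun t => ?_)
  show ‖f t / t‖ ≤ K
  rw [Real.norm_eq_abs, abs_div]
  exact div_le_of_le_mul₀ (abs_nonneg t) hK0 (hK t)

lemma integral_le_mul_sub_of_le {φ : ℝ → ℝ} {c d B : ℝ} (hcd : c ≤ d)
    (hφ : IntervalIntegrable φ volume c d) (hB : ∀ t ∈ Ioo c d, φ t ≤ B) :
    ∫ t in c..d, φ t ≤ B * (d - c) := by
  have h := integral_le_sub_of_hasDeriv_right_of_le hcd (g := fun t => B * t) (by fun_prop)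
    (fun t _ => by simpa using ((hasDerivAt_id t).const_mul B).hasDerivWithinAt)
    ((intervalIntegrable_iff_integrableOn_Icc_of_le hcd).1 hφ) hB
  linarith [mul_sub B d c]

lemma integral_div_self_le_mul_log {f : ℝ → ℝ} {c d B : ℝ} (hc : 0 < c) (hcd : c ≤ d)
    (hf : IntervalIntegrable (fun t => f t / t) volume c d) (hB : ∀ t ∈ Ioo c d, f t ≤ B) :
    ∫ t in c..d, f t / t ≤ B * log (d / c) := by
  have hg : ∀ t, 0 < t → HasDerivAt (fun t => B * log t) (B * t⁻¹) t :=
    fun t ht => (hasDerivAt_log ht.ne').const_mul B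
  have h := integral_le_sub_of_hasDeriv_right_of_le hcd
    (fun t ht => (hg t (hc.trans_le ht.1)).continuousAt.continuousWithinAt)
    (fun t ht => (hg t (hc.trans ht.1)).hasDerivWithinAt)
    ((intervalIntegrable_iff_integrableOn_Icc_of_le hcd).1 hf)
    (fun t ht => by
      rw [div_eq_mul_inv]
      exact mul_le_mul_of_nonneg_right (hB t ht) (inv_nonneg.2 (hc.trans ht.1).le))
  rwa [log_div (hc.trans_le hcd).ne' hc.ne', mul_sub]

lemma mul_log_sub_le_integral_div_self {f : ℝ → ℝ} {c d A K : ℝ} (hc : 0 < c) (hcd : c ≤ d)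
    (hK : 0 ≤ K) (hf : IntervalIntegrable (fun t => f t / t) volume c d)
    (hA : ∀ t ∈ Ioo c d, A - K / t ≤ f t) :
    A * log (d / c) - K / c ≤ ∫ t in c..d, f t / t := by
  have hg : ∀ t, 0 < t →
      HasDerivAt (fun t => A * log t + K * t⁻¹) (A * t⁻¹ + K * -(t ^ 2)⁻¹) t :=
    fun t ht => ((hasDerivAt_log ht.ne').const_mul A).add ((hasDerivAt_inv ht.ne').const_mul K)
  have h := sub_le_integral_of_hasDeriv_right_of_le hcd
    (fun t ht => (hg t (hc.trans_le ht.1)).continuousAt.continuousWithinAt)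
    (fun t ht => (hg t (hc.trans ht.1)).hasDerivWithinAt)
    ((intervalIntegrable_iff_integrableOn_Icc_of_le hcd).1 hf)
    (fun t ht => by
      have ht₀ : 0 < t := hc.trans ht.1
      calc A * t⁻¹ + K * -(t ^ 2)⁻¹ = (A - K / t) / t := by field_simp; ring
        _ ≤ f t / t := div_le_div_of_nonneg_right (hA t ht) ht₀.le)
  have hKd : 0 ≤ K * d⁻¹ := mul_nonneg hK (inv_nonneg.2 (hc.trans_le hcd).le)
  rw [log_div (hc.trans_le hcd).ne' hc.ne', div_eq_mul_inv]
  linarith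

noncomputable def arctanSpread (a s t : ℝ) : ℝ := arctan (a * (s + t)) - arctan (a * (s - t))

section Spread

variable {a s t : ℝ}

lemma arctanSpread_neg (a s t : ℝ) : arctanSpread a (-s) t = arctanSpread a s t := by
  rw [arctanSpread, arctanSpread, show a * (-s + t) = -(a * (s - t)) by ring,
    show a * (-s - t) = -(a * (s + t)) by ring, arctan_neg, arctan_neg]
  ring

lemma arctanSpread_nonneg (ha : 0 ≤ a) (ht : 0 ≤ t) : 0 ≤ arctanSpread a s t :=
  sub_nonneg.2 (arctan_strictMono.monotone (by nlinarith))

lemma arctanSpread_le_pi : arctanSpread a s t ≤ π := by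
  rw [arctanSpread]
  linarith [arctan_lt_pi_div_two (a * (s + t)), neg_pi_div_two_lt_arctan (a * (s - t))]

lemma abs_arctanSpread_le (a s t : ℝ) : |arctanSpread a s t| ≤ 2 * |a| * |t| := by
  calc |arctanSpread a s t| ≤ |a * (s + t) - a * (s - t)| := abs_arctan_sub_arctan_le _ _
    _ = 2 * |a| * |t| := by rw [show a * (s + t) - a * (s - t) = 2 * a * t by ring, abs_mul,
        abs_mul, abs_two]

lemma arctanSpread_div_le_of_two_mul_le (ha : 0 < a) (ht : 0 < t) (hts : 2 * t ≤ s) :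
    arctanSpread a s t / t ≤ 8 / (a * s ^ 2) := by
  have hs : 0 < s := by linarith
  rw [div_le_iff₀ ht]
  calc arctanSpread a s t ≤ (a * (s + t) - a * (s - t)) / (1 + (a * s / 2) ^ 2) :=
        arctan_sub_arctan_le (by nlinarith) fun τ hτ =>
          pow_le_pow_left₀ (by positivity) (by nlinarith [hτ.1]) 2
    _ ≤ (2 * a * t) / (a * s / 2) ^ 2 :=
        div_le_div₀ (by positivity) (by linarith) (by positivity) (by linarith)
    _ = 8 / (a * s ^ 2) * t := by field_simp; ring

lemma arctanSpread_div_le_of_four_mul_le (ha : 0 < a) (hs : 0 ≤ s) (ht : 0 < t)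
    (htρ : 4 * t ≤ 1 / a + s) : arctanSpread a s t / t ≤ 16 / (1 / a + s) := by
  have hρ : 0 < 1 / a + s := by positivity
  rcases le_or_gt s (1 / a) with hsa | hsa
  · calc arctanSpread a s t / t ≤ 2 * a := by
          rw [div_le_iff₀ ht]
          simpa [abs_of_pos ha, abs_of_pos ht] using
            (le_abs_self _).trans (abs_arctanSpread_le a s t)
      _ ≤ 16 / (1 / a + s) := by
          rw [le_div_iff₀ hρ]
          nlinarith [mul_le_mul_of_nonneg_left hsa ha.le, mul_one_div_cancel ha.ne']
  · have has : 1 < a * s := by rwa [div_lt_iff₀ ha, mul_comm] at hsa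
    have hs₀ : 0 < s := (one_div_pos.2 ha).trans hsa
    calc arctanSpread a s t / t ≤ 8 / (a * s ^ 2) :=
          arctanSpread_div_le_of_two_mul_le ha ht (by linarith)
      _ ≤ 16 / (1 / a + s) := by
          rw [div_le_div_iff₀ (by positivity) hρ]
          nlinarith

lemma pi_sub_le_arctanSpread (ha : 0 < a) (ht : 0 < t) (hs : 0 ≤ s) (hst : 2 * s ≤ t) :
    π - 4 / (a * t) ≤ arctanSpread a s t := by
  have h := pi_div_two_sub_inv_le_arctan (show 0 < a * t / 2 by positivity)
  have h₁ : arctan (a * t / 2) ≤ arctan (a * (s + t)) :=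
    arctan_strictMono.monotone (by nlinarith)
  have h₂ : arctan (a * t / 2) ≤ -arctan (a * (s - t)) := by
    rw [← arctan_neg]
    exact arctan_strictMono.monotone (by nlinarith)
  rw [inv_div] at h
  rw [arctanSpread]
  linarith [show 4 / (a * t) = 2 * (2 / (a * t)) by ring]

end Spread

lemma intervalIntegrable_arctanSpread_div (a s c d : ℝ) :
    IntervalIntegrable (fun t => arctanSpread a s t / t) volume c d :=
  intervalIntegrable_div_self_of_abs_le (by unfold arctanSpread; fun_prop)
    (abs_arctanSpread_le a s) c d

noncomputable def spreadIntegral (a s : ℝ) : ℝ := ∫ t in (0 : ℝ)..5 / 4, arctanSpread a s t / t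

lemma integral_arctan_sub_div_eq_spreadIntegral (a s : ℝ) :
    ∫ t in -(5 / 4 : ℝ)..5 / 4, (arctan (a * (t + s)) - arctan (a * s)) / t =
      spreadIntegral a s := by
  have hf : ∀ c d : ℝ, IntervalIntegrable
      (fun t => (arctan (a * (t + s)) - arctan (a * s)) / t) volume c d :=
    intervalIntegrable_div_self_of_abs_le (by fun_prop) fun t => by
      simpa [← mul_sub, abs_mul] using abs_arctan_sub_arctan_le (a * (t + s)) (a * s)
  have hg : ∀ c d : ℝ, IntervalIntegrable
      (fun t => (arctan (a * s) - arctan (a * (s - t))) / t) volume c d :=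
    intervalIntegrable_div_self_of_abs_le (by fun_prop) fun t => by
      simpa [← mul_sub, abs_mul] using abs_arctan_sub_arctan_le (a * s) (a * (s - t))
  rw [← integral_add_adjacent_intervals (hf _ 0) (hf 0 _), ← neg_zero, ← integral_comp_neg,
    neg_zero, ← integral_add ?_ (hf 0 _), spreadIntegral]
  · congr 1
    funext t
    rw [neg_add_eq_sub, add_comm t s, arctanSpread, div_neg]
    ring
  · convert hg 0 (5 / 4) using 2 with t
    rw [neg_add_eq_sub, div_neg, ← neg_div, neg_sub]

section SpreadIntegral

variable {a s : ℝ}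

lemma spreadIntegral_neg (a s : ℝ) : spreadIntegral a (-s) = spreadIntegral a s := by
  simp only [spreadIntegral, arctanSpread_neg]

lemma spreadIntegral_abs (a s : ℝ) : spreadIntegral a |s| = spreadIntegral a s := by
  rcases abs_choice s with h | h <;> rw [h]
  exact spreadIntegral_neg a s

lemma spreadIntegral_eq_add (a s c : ℝ) :
    spreadIntegral a s =
      (∫ t in (0 : ℝ)..c, arctanSpread a s t / t) + ∫ t in c..5 / 4, arctanSpread a s t / t :=
  (integral_add_adjacent_intervals (intervalIntegrable_arctanSpread_div a s _ _)
    (intervalIntegrable_arctanSpread_div a s _ _)).symm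

lemma integral_arctanSpread_div_nonneg (ha : 0 ≤ a) {c d : ℝ} (hc : 0 ≤ c) (hcd : c ≤ d) :
    0 ≤ ∫ t in c..d, arctanSpread a s t / t :=
  integral_nonneg hcd fun _ ht =>
    div_nonneg (arctanSpread_nonneg ha (hc.trans ht.1)) (hc.trans ht.1)

lemma spreadIntegral_nonneg (ha : 0 ≤ a) : 0 ≤ spreadIntegral a s :=
  integral_arctanSpread_div_nonneg ha le_rfl (by norm_num)

lemma spreadIntegral_le_mul_log_add (ha : 1 ≤ a) (hs₀ : 0 ≤ s) (hs : s ≤ 4) :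
    spreadIntegral a s ≤ π * log (a / (1 + a * s)) + 9 * π := by
  have ha₀ : 0 < a := by linarith
  set ρ := 1 / a + s
  have hρ₀ : 0 < ρ := by positivity
  have hρ₅ : ρ ≤ 5 := by linarith [(div_le_one ha₀).2 ha]
  -- below `ρ / 4` the integrand is `O(1/ρ)`; above it, `arctanSpread ≤ π` gives `π log (1/ρ)`
  rw [log_div_one_add_mul ha₀ hs₀, spreadIntegral_eq_add a s (ρ / 4)]
  have h₁ := integral_le_mul_sub_of_le (c := 0) (d := ρ / 4) (by positivity)
    (intervalIntegrable_arctanSpread_div a s _ _)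
    fun t ht => arctanSpread_div_le_of_four_mul_le ha₀ hs₀ ht.1 (by linarith [ht.2])
  have h₂ := integral_div_self_le_mul_log (c := ρ / 4) (d := 5 / 4) (by positivity) (by linarith)
    (intervalIntegrable_arctanSpread_div a s _ _) fun t _ => arctanSpread_le_pi
  rw [show (5 / 4) / (ρ / 4) = 5 / ρ by field_simp, log_div (by norm_num) hρ₀.ne'] at h₂
  rw [show 16 / ρ * (ρ / 4 - 0) = 4 by field_simp; ring] at h₁
  have hlog₅ : log 5 ≤ 4 := by linarith [log_le_sub_one_of_pos (show (0 : ℝ) < 5 by norm_num)]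
  nlinarith [pi_gt_three]

lemma mul_log_sub_le_spreadIntegral (ha : 0 < a) (hs : 0 ≤ s) :
    π * log (a / (1 + a * s)) - 9 * π ≤ spreadIntegral a s := by
  set ρ := 1 / a + s
  have hρ₀ : 0 < ρ := by positivity
  have hlog : log (8 / 5) ≤ 3 / 5 := by
    linarith [log_le_sub_one_of_pos (show (0 : ℝ) < 8 / 5 by norm_num)]
  rw [log_div_one_add_mul ha hs]
  rcases le_or_gt (5 / 8) ρ with hρ | hρ
  · have h : -log ρ ≤ log (8 / 5) := by
      rw [← log_inv]
      exact log_le_log (inv_pos.2 hρ₀) ((inv_le_comm₀ hρ₀ (by norm_num)).2 (by norm_num; linarith))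
    nlinarith [spreadIntegral_nonneg (s := s) ha.le, pi_pos]
  · -- above `2 * ρ` the integrand is `π / t - O(1 / (a t²))`
    rw [spreadIntegral_eq_add a s (2 * ρ)]
    have hsρ : s ≤ ρ := by linarith [one_div_pos.2 ha]
    have h₁ := integral_arctanSpread_div_nonneg (s := s) ha.le le_rfl (by positivity : 0 ≤ 2 * ρ)
    have h₂ := mul_log_sub_le_integral_div_self (c := 2 * ρ) (d := 5 / 4) (A := π) (K := 4 / a)
      (by positivity) (by linarith) (by positivity) (intervalIntegrable_arctanSpread_div a s _ _)
      fun t ht => by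
        rw [div_div]
        exact pi_sub_le_arctanSpread ha (by linarith [ht.1]) hs (by linarith [ht.1])
    have hK : 4 / a / (2 * ρ) ≤ 2 := by
      rw [div_div, div_le_iff₀ (by positivity)]
      nlinarith [mul_one_div_cancel ha.ne']
    rw [show (5 / 4) / (2 * ρ) = (8 / 5)⁻¹ / ρ by field_simp; ring,
      log_div (by norm_num) hρ₀.ne', log_inv] at h₂
    nlinarith [pi_gt_three]

lemma spreadIntegral_le_ten_div_sq (ha : 1 ≤ a) (hs : 5 / 2 ≤ s) :
    spreadIntegral a s ≤ 10 / s ^ 2 := by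
  have h := integral_le_mul_sub_of_le (c := 0) (d := 5 / 4) (by norm_num)
    (intervalIntegrable_arctanSpread_div a s _ _)
    fun t ht => arctanSpread_div_le_of_two_mul_le (by linarith) ht.1 (by linarith [ht.2])
  calc spreadIntegral a s ≤ 8 / (a * s ^ 2) * (5 / 4 - 0) := h
    _ = 10 / (a * s ^ 2) := by ring
    _ ≤ 10 / s ^ 2 := div_le_div_of_nonneg_left (by norm_num) (by positivity) (by nlinarith)

lemma abs_spreadIntegral_sub_log_le (ha : 1 ≤ a) (hs : |s| ≤ 4) :
    |spreadIntegral a s - π * log (a / (1 + a * |s|))| ≤ 9 * π := by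
  rw [← spreadIntegral_abs, abs_sub_le_iff]
  constructor
  · linarith [spreadIntegral_le_mul_log_add ha (abs_nonneg s) hs]
  · linarith [mul_log_sub_le_spreadIntegral (by linarith) (abs_nonneg s) (a := a)]

lemma spreadIntegral_le_div_sq (ha : 1 ≤ a) (hs : 1 / 2 ≤ |s|) :
    spreadIntegral a s ≤ 250 / s ^ 2 := by
  rw [← spreadIntegral_abs, ← sq_abs s]
  rcases le_total |s| (5 / 2) with h | h
  · have hR : a / (1 + a * |s|) ≤ 2 := by
      rw [div_le_iff₀ (by positivity)]
      nlinarith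
    have hlog : log (a / (1 + a * |s|)) ≤ 1 := by
      linarith [log_le_sub_one_of_pos (show 0 < a / (1 + a * |s|) by positivity)]
    calc spreadIntegral a |s| ≤ π * log (a / (1 + a * |s|)) + 9 * π :=
          spreadIntegral_le_mul_log_add ha (abs_nonneg s) (by linarith)
      _ ≤ 40 := by nlinarith [pi_le_four, pi_pos]
      _ ≤ 250 / |s| ^ 2 := by
          rw [le_div_iff₀ (by positivity)]
          nlinarith
  · exact (spreadIntegral_le_ten_div_sq ha h).trans
      (div_le_div_of_nonneg_right (by norm_num) (by positivity))

end SpreadIntegral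

lemma abs_sub_nearestInt_le (x : ℝ) : |x - nearestInt x| ≤ 1 / 2 := by
  have h₁ := Int.le_ceil (x - 1 / 2)
  have h₂ := Int.ceil_lt_add_one (x - 1 / 2)
  rw [nearestInt, abs_le]
  constructor <;> linarith

lemma nearestInt_ne_zero {x : ℝ} (hx : 1 / 2 < |x|) : nearestInt x ≠ 0 := by
  intro h
  have := abs_sub_nearestInt_le x
  rw [h, Int.cast_zero, sub_zero] at this
  linarith

lemma abs_intCast_sub_le_two_mul {x : ℝ} {m n : ℤ} (hm : |x - m| ≤ 1 / 2) (hn : n ≠ m) :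
    |((n - m : ℤ) : ℝ)| ≤ 2 * |x - n| := by
  have h₁ : (1 : ℝ) ≤ |((n - m : ℤ) : ℝ)| := by exact_mod_cast Int.one_le_abs (sub_ne_zero.2 hn)
  have h₂ : |((n - m : ℤ) : ℝ)| ≤ |x - n| + |x - m| := by
    rw [Int.cast_sub, abs_sub_comm x n]
    exact abs_sub_le _ _ _
  linarith

noncomputable def thetaWeight (α : ℝ) (n : ℤ) : ℝ := if n = 0 then 1 else |(n : ℝ)| ^ α

lemma one_le_thetaWeight {α : ℝ} (hα : 0 ≤ α) (n : ℤ) : 1 ≤ thetaWeight α n := by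
  unfold thetaWeight
  split_ifs with hn
  · exact le_rfl
  · exact one_le_rpow (by exact_mod_cast Int.one_le_abs hn) hα

lemma thetaN_eq (α : ℝ) (n : ℤ) (x : ℝ) :
    thetaN α n x = spreadIntegral (thetaWeight α n) (x - n) / π := by
  rw [thetaN, thetaWeight]
  split_ifs with hn <;> rw [one_div_mul_eq_div, ← integral_arctan_sub_div_eq_spreadIntegral]
  · simp [hn]
  · simp_rw [add_sub_assoc]

section Theta

variable {α : ℝ}

lemma thetaN_nonneg (hα : 0 ≤ α) (n : ℤ) (x : ℝ) : 0 ≤ thetaN α n x := by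
  rw [thetaN_eq]
  exact div_nonneg (spreadIntegral_nonneg (by linarith [one_le_thetaWeight hα n])) pi_pos.le

lemma abs_thetaN_nearestInt_sub_log_le (hα : 0 ≤ α) {x : ℝ} (hx : 1 / 2 < |x|) :
    |thetaN α (nearestInt x) x - log (|(nearestInt x : ℝ)| ^ α /
      (1 + |(nearestInt x : ℝ)| ^ α * |x - nearestInt x|))| ≤ 9 := by
  have hw : thetaWeight α (nearestInt x) = |(nearestInt x : ℝ)| ^ α :=
    if_neg (nearestInt_ne_zero hx)
  have h := abs_spreadIntegral_sub_log_le (one_le_thetaWeight hα (nearestInt x))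
    ((abs_sub_nearestInt_le x).trans (by norm_num))
  rw [hw] at h
  rw [thetaN_eq, hw, div_sub' pi_pos.ne', abs_div, abs_of_pos pi_pos, div_le_iff₀ pi_pos]
  exact h

lemma thetaN_le_of_ne_nearestInt (hα : 0 ≤ α) {x : ℝ} {n : ℤ} (hn : n ≠ nearestInt x) :
    thetaN α n x ≤ 1000 / ((n - nearestInt x : ℤ) : ℝ) ^ 2 := by
  have hk := abs_intCast_sub_le_two_mul (abs_sub_nearestInt_le x) hn
  have hk₁ : (1 : ℝ) ≤ |((n - nearestInt x : ℤ) : ℝ)| := by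
    exact_mod_cast Int.one_le_abs (sub_ne_zero.2 hn)
  have hxn : 1 / 2 ≤ |x - n| := by linarith
  have hw := one_le_thetaWeight hα n
  have hG := spreadIntegral_le_div_sq hw hxn
  rw [thetaN_eq]
  refine (div_le_self (spreadIntegral_nonneg (by linarith)) (by linarith [pi_gt_three])).trans
    (hG.trans ?_)
  have hsq := pow_le_pow_left₀ (abs_nonneg _) hk 2
  rw [← sq_abs (x - n), ← sq_abs ((n - nearestInt x : ℤ) : ℝ),
    div_le_div_iff₀ (by positivity) (by positivity)]
  linarith

end Theta

lemma hasSum_ite_add_div_sq_sub (m : ℤ) (b B : ℝ) :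
    HasSum (fun n : ℤ => (if n = m then b else 0) + B / ((n - m : ℤ) : ℝ) ^ 2)
      (b + B * ∑' k : ℤ, 1 / (k : ℝ) ^ 2) := by
  have h : HasSum (fun k : ℤ => B / (k : ℝ) ^ 2) (B * ∑' k : ℤ, 1 / (k : ℝ) ^ 2) := by
    simpa only [mul_one_div] using
      ((summable_one_div_int_pow.2 one_lt_two).hasSum.mul_left B)
  exact (hasSum_ite_eq m b).add
    ((Equiv.subRight m).hasSum_iff (f := fun k : ℤ => B / (k : ℝ) ^ 2).2 h)

section InverseSquareMajorant

variable {f : ℤ → ℝ} {m : ℤ} {B : ℝ}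

lemma le_ite_add_div_sq_sub (hB : ∀ n ≠ m, f n ≤ B / ((n - m : ℤ) : ℝ) ^ 2)
    (n : ℤ) : f n ≤ (if n = m then f m else 0) + B / ((n - m : ℤ) : ℝ) ^ 2 := by
  by_cases hn : n = m
  · simp [hn]
  · simpa [hn] using hB n hn

lemma summable_of_le_div_sq_sub (hf : ∀ n, 0 ≤ f n)
    (hB : ∀ n ≠ m, f n ≤ B / ((n - m : ℤ) : ℝ) ^ 2) : Summable f :=
  .of_nonneg_of_le hf (le_ite_add_div_sq_sub hB) (hasSum_ite_add_div_sq_sub m _ B).summable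

lemma tsum_le_add_of_le_div_sq_sub (hf : ∀ n, 0 ≤ f n)
    (hB : ∀ n ≠ m, f n ≤ B / ((n - m : ℤ) : ℝ) ^ 2) :
    ∑' n, f n ≤ f m + B * ∑' k : ℤ, 1 / (k : ℝ) ^ 2 :=
  hasSum_le (le_ite_add_div_sq_sub hB) (summable_of_le_div_sq_sub hf hB).hasSum
    (hasSum_ite_add_div_sq_sub m _ B)

end InverseSquareMajorant

theorem stmt_18 (α : ℝ) (hα : α ∈ Set.Icc (0:ℝ) 2) :
    ∃ c C : ℝ, 0 < c ∧ c ≤ C ∧ ∀ x : ℝ, 1/2 < |x| →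
      c * (|(nearestInt x : ℝ)| ^ α /
            (1 + |(nearestInt x : ℝ)| ^ α * |x - (nearestInt x : ℝ)|)) ≤
          Real.exp (∑' n : ℤ, thetaN α n x) ∧
      Real.exp (∑' n : ℤ, thetaN α n x) ≤
        C * (|(nearestInt x : ℝ)| ^ α /
              (1 + |(nearestInt x : ℝ)| ^ α * |x - (nearestInt x : ℝ)|)) := by
  set K : ℝ := 9 + 1000 * ∑' k : ℤ, 1 / (k : ℝ) ^ 2
  have hK : 0 ≤ K := by positivity
  refine ⟨exp (-K), exp K, exp_pos _, exp_le_exp.2 (by linarith), fun x hx => ?_⟩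
  have hθ := fun n => thetaN_nonneg hα.1 n x
  have hoff : ∀ n ≠ nearestInt x, thetaN α n x ≤ 1000 / ((n - nearestInt x : ℤ) : ℝ) ^ 2 :=
    fun n hn => thetaN_le_of_ne_nearestInt hα.1 hn
  have hlow := (summable_of_le_div_sq_sub hθ hoff).le_tsum (nearestInt x) fun n _ => hθ n
  have hup := tsum_le_add_of_le_div_sq_sub hθ hoff
  have hmain := abs_le.1 (abs_thetaN_nearestInt_sub_log_le hα.1 hx)
  have hR : 0 < |(nearestInt x : ℝ)| ^ α / (1 + |(nearestInt x : ℝ)| ^ α * |x - nearestInt x|) := by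
    have hm : (nearestInt x : ℝ) ≠ 0 := by exact_mod_cast nearestInt_ne_zero hx
    have := abs_pos.2 hm
    positivity
  rw [← exp_log hR, ← exp_add, ← exp_add, exp_le_exp, exp_le_exp]
  constructor <;> linarith
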